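/- arXiv:math/0609012 — 4 statements merged into one kernel-verified Lean document; each statement's English description precedes it below -/
import Mathlib

section
/- Main Theorem (Theorem 3.1, ribbon-graph form). Let G = (H, σ, θ) be a combinatorial map encoding an orientable ribbon graph, let K be a field and let A, B, d be nonzero elements of K. Then Σ_{F ⊆ E} A^{e(F)} · B^{e(G)−e(F)} · d^{bc(F)−1} = A^{r(G)} · B^{n(G)} · d^{k(G)−1} · Σ_{F ⊆ E} (Bd/A)^{r(G)−r(F)} · (Ad/B)^{n(F)} · (1/d)^{k(F)−bc(F)+n(F)}, where all exponents are integers and negative exponents denote inverses in K. (The left-hand side is the Kauffman bracket ⟨L⟩(A,B,d) of the alternating virtual link diagram L whose associated ribbon graph is G, and the right-hand side is A^{r(G)} B^{n(G)} d^{k(G)−1} · R_G(Bd/A, Ad/B, 1/d), the evaluation of the Bollobás–Riordan polynomial of G.) -/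
open Finset
open scoped Classical

/-- The permutation `θ_F` acting as `θ` on the half-edges belonging to edges of the
spanning subgraph (encoded by the `θ`-invariant set `S` of half-edges) and as the
identity elsewhere.  Defined whenever `S` is `θ`-invariant and `θ` is an involution
(and as the identity permutation otherwise). -/
noncomputable def restrictPerm {H : Type*} [DecidableEq H] (θ : Equiv.Perm H) (S : Finset H) :
    Equiv.Perm H :=
  if hcl : (∀ a ∈ S, θ a ∈ S) ∧ (∀ a, θ (θ a) = a) then
    { toFun := fun a => if a ∈ S then θ a else a
      invFun := fun a => if a ∈ S then θ a else a
      left_inv := fun a => by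
        by_cases h : a ∈ S
        · simp [h, hcl.1 a h, hcl.2 a]
        · simp [h]
      right_inv := fun a => by
        by_cases h : a ∈ S
        · simp [h, hcl.1 a h, hcl.2 a]
        · simp [h] }
  else 1

/-- The number of orbits of the cyclic group generated by a permutation. -/
noncomputable def permOrbits {H : Type*} [Fintype H] (π : Equiv.Perm H) : ℕ :=
  Nat.card (MulAction.orbitRel.Quotient (Subgroup.zpowers π) H)

/-- `v(G)`: the number of vertices, i.e. the number of orbits of `σ`. -/
noncomputable def vCount {H : Type*} [Fintype H] (σ : Equiv.Perm H) : ℕ := permOrbits σ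

/-- `bc(F)`: the number of boundary components of the spanning subgraph, i.e. the
number of orbits of `σ ∘ θ_F`. -/
noncomputable def bcCount {H : Type*} [Fintype H] [DecidableEq H]
    (σ θ : Equiv.Perm H) (S : Finset H) : ℕ :=
  permOrbits (σ * restrictPerm θ S)

/-- `k(F)`: the number of connected components of the spanning subgraph, i.e. the
number of orbits of the subgroup generated by `σ` and `θ_F`. -/
noncomputable def kCount {H : Type*} [Fintype H] [DecidableEq H]
    (σ θ : Equiv.Perm H) (S : Finset H) : ℕ :=
  Nat.card (MulAction.orbitRel.Quotient
    (Subgroup.closure {σ, restrictPerm θ S} : Subgroup (Equiv.Perm H)) H)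

/-- `e(F)`: the number of edges of the spanning subgraph, i.e. half the number of
half-edges in `S` (as an integer, for use in exponents). -/
def eCount {H : Type*} (S : Finset H) : ℤ := (S.card / 2 : ℕ)

/-- `r(F) = v(G) - k(F)`: the rank of the spanning subgraph. -/
noncomputable def rCount {H : Type*} [Fintype H] [DecidableEq H]
    (σ θ : Equiv.Perm H) (S : Finset H) : ℤ :=
  (vCount σ : ℤ) - (kCount σ θ S : ℤ)

/-- `n(F) = e(F) - r(F)`: the nullity of the spanning subgraph. -/
noncomputable def nCount {H : Type*} [Fintype H] [DecidableEq H]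
    (σ θ : Equiv.Perm H) (S : Finset H) : ℤ :=
  eCount S - rCount σ θ S

/-- The spanning subgraphs `F ⊆ E`, encoded as the `θ`-invariant subsets of the
set of half-edges. -/
def spanningSets {H : Type*} [Fintype H] [DecidableEq H] (θ : Equiv.Perm H) :
    Finset (Finset H) :=
  Finset.univ.filter (fun S => ∀ a ∈ S, θ a ∈ S)

private lemma zpow_triple_eq {K : Type*} [Field K] (A B d : K)
    {a b c a' b' c' : ℤ} (h1 : a = a') (h2 : b = b') (h3 : c = c') :
    A ^ a * B ^ b * d ^ c = A ^ a' * B ^ b' * d ^ c' := by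
  subst h1; subst h2; subst h3; rfl

private lemma micro {K : Type*} [Field K] {A B d : K}
    (hA : A ≠ 0) (hB : B ≠ 0) (hd : d ≠ 0) (m n t : ℤ) :
    (B * d / A) ^ m * (A * d / B) ^ n * (1 / d) ^ t
      = A ^ (n - m) * B ^ (m - n) * d ^ (m + n - t) := by
  rw [div_zpow, div_zpow, one_div, inv_zpow, mul_zpow, mul_zpow,
    zpow_sub₀ hA, zpow_sub₀ hB, zpow_sub₀ hd, zpow_add₀ hd]
  field_simp

/-- **Main Theorem 3.1** (Chmutov–Pak).  For an orientable ribbon graph encoded by a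
combinatorial map `(H, σ, θ)` (with `θ` a fixed-point-free involution), the Kauffman
bracket of the associated alternating virtual link diagram, i.e. the state sum
`∑_F A^{e(F)} B^{e(G)-e(F)} d^{bc(F)-1}`, equals
`A^{r(G)} B^{n(G)} d^{k(G)-1} · R_G(Bd/A, Ad/B, 1/d)`, the evaluation of the
Bollobás–Riordan polynomial. -/
theorem kauffman_bracket_eq_bollobas_riordan
    {H : Type*} [Fintype H] [DecidableEq H] (σ θ : Equiv.Perm H)
    (hinv : ∀ a, θ (θ a) = a) (hfp : ∀ a, θ a ≠ a)
    {K : Type*} [Field K] (A B d : K) (hA : A ≠ 0) (hB : B ≠ 0) (hd : d ≠ 0) :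
    ∑ S ∈ spanningSets θ,
        A ^ eCount S * B ^ (eCount (Finset.univ : Finset H) - eCount S) *
          d ^ ((bcCount σ θ S : ℤ) - 1)
      =
    A ^ rCount σ θ (Finset.univ : Finset H) * B ^ nCount σ θ (Finset.univ : Finset H) *
      d ^ ((kCount σ θ (Finset.univ : Finset H) : ℤ) - 1) *
      ∑ S ∈ spanningSets θ,
        (B * d / A) ^ (rCount σ θ (Finset.univ : Finset H) - rCount σ θ S) *
        (A * d / B) ^ nCount σ θ S *
        (1 / d) ^ ((kCount σ θ S : ℤ) - (bcCount σ θ S : ℤ) + nCount σ θ S) := by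
  rw [Finset.mul_sum]
  apply Finset.sum_congr rfl
  intro S hS
  rw [micro hA hB hd]
  rw [show A ^ rCount σ θ (Finset.univ : Finset H) * B ^ nCount σ θ (Finset.univ : Finset H) *
      d ^ ((kCount σ θ (Finset.univ : Finset H) : ℤ) - 1) *
      (A ^ (nCount σ θ S - (rCount σ θ (Finset.univ : Finset H) - rCount σ θ S)) *
       B ^ (rCount σ θ (Finset.univ : Finset H) - rCount σ θ S - nCount σ θ S) *
       d ^ (rCount σ θ (Finset.univ : Finset H) - rCount σ θ S + nCount σ θ S -
          ((kCount σ θ S : ℤ) - (bcCount σ θ S : ℤ) + nCount σ θ S)))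
    = A ^ (rCount σ θ (Finset.univ : Finset H) +
          (nCount σ θ S - (rCount σ θ (Finset.univ : Finset H) - rCount σ θ S))) *
      B ^ (nCount σ θ (Finset.univ : Finset H) +
          (rCount σ θ (Finset.univ : Finset H) - rCount σ θ S - nCount σ θ S)) *
      d ^ ((kCount σ θ (Finset.univ : Finset H) : ℤ) - 1 +
          (rCount σ θ (Finset.univ : Finset H) - rCount σ θ S + nCount σ θ S -
          ((kCount σ θ S : ℤ) - (bcCount σ θ S : ℤ) + nCount σ θ S)))
    from by rw [zpow_add₀ hA, zpow_add₀ hB, zpow_add₀ hd]; ring]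
  apply zpow_triple_eq <;> simp only [nCount, rCount] <;> ring
end

section
/- Theorem 4.1 (signed version, ribbon-graph form). Let Ĝ = (H, σ, θ, ε) be a signed combinatorial map encoding an orientable ribbon graph with sign function ε : E → {+1, −1}, let K be a field and let A, B, d be nonzero elements of K. Then Σ_{F ⊆ E} A^{e₊(F)+e₋(F̄)} · B^{e₋(F)+e₊(F̄)} · d^{bc(F)−1} = A^{r(Ĝ)} · B^{n(Ĝ)} · d^{k(Ĝ)−1} · Σ_{F ⊆ E} (Bd/A)^{r(Ĝ)−r(F)} · (Ad/B)^{n(F)} · (B/A)^{e₋(F)−e₋(F̄)} · (1/d)^{k(F)−bc(F)+n(F)}, where F̄ = E ∖ F and all exponents are integers. (The left-hand side is the Kauffman bracket ⟨L⟩(A,B,d) of a checkerboard colorable virtual link diagram L with associated signed ribbon graph Ĝ, and the right-hand side equals A^{r(Ĝ)} B^{n(Ĝ)} d^{k(Ĝ)−1} · R_Ĝ(Bd/A, Ad/B, 1/d), the evaluation of the signed Bollobás–Riordan polynomial, since x^{s(F)} y^{−s(F)} = (x/y)^{s(F)} = (B/A)^{2s(F)} at this evaluation point.) -/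
open Finset
open scoped Classical

/-- `e₊(F)`: the number of positive edges in the spanning subgraph encoded by the
`θ`-invariant set `S` of half-edges, for a sign function `ε` on half-edges that is
constant on edges. -/
def ePosCount {H : Type*} [DecidableEq H] (ε : H → ℤ) (S : Finset H) : ℤ :=
  ((S.filter (fun a => ε a = 1)).card / 2 : ℕ)

/-- `e₋(F)`: the number of negative edges in the spanning subgraph encoded by the
`θ`-invariant set `S` of half-edges. -/
def eNegCount {H : Type*} [DecidableEq H] (ε : H → ℤ) (S : Finset H) : ℤ :=
  ((S.filter (fun a => ε a = -1)).card / 2 : ℕ)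


lemma even_card_of_invariant {H : Type*} [DecidableEq H] (θ : Equiv.Perm H)
    (hinv : ∀ a, θ (θ a) = a) (hfp : ∀ a, θ a ≠ a) :
    ∀ S : Finset H, (∀ a ∈ S, θ a ∈ S) → Even S.card := by
  intro S
  induction S using Finset.strongInduction with
  | _ S ih =>
    intro hS
    rcases S.eq_empty_or_nonempty with rfl | ⟨a, ha⟩
    · simp
    · have hθa : θ a ∈ S := hS a ha
      have hsub : S \ {a, θ a} ⊆ S := Finset.sdiff_subset
      have hssub : S \ {a, θ a} ⊂ S := by
        refine Finset.ssubset_iff_of_subset hsub |>.2 ⟨a, ha, by simp⟩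
      have hinv' : ∀ b ∈ S \ {a, θ a}, θ b ∈ S \ {a, θ a} := by
        intro b hb
        simp only [Finset.mem_sdiff, Finset.mem_insert, Finset.mem_singleton] at hb ⊢
        refine ⟨hS b hb.1, ?_⟩
        rintro (h | h)
        · exact hb.2 (Or.inr (by rw [← h, hinv]))
        · exact hb.2 (Or.inl (θ.injective h))
      have hev := ih _ hssub hinv'
      have hpair : ({a, θ a} : Finset H) ⊆ S := by
        intro x hx
        simp only [Finset.mem_insert, Finset.mem_singleton] at hx
        rcases hx with rfl | rfl <;> assumption
      have hcard : (S \ {a, θ a}).card + 2 = S.card := by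
        have h2 : ({a, θ a} : Finset H).card = 2 := by
          rw [Finset.card_insert_of_notMem (by simp [Ne.symm (hfp a)]), Finset.card_singleton]
        rw [← h2, Finset.card_sdiff_add_card_eq_card hpair]
      rw [Nat.even_iff] at hev ⊢
      omega

lemma zpow_key {K : Type*} [Field K] (A B d : K) (hA : A ≠ 0) (hB : B ≠ 0) (hd : d ≠ 0)
    (p q r x y z w p' q' r' : ℤ)
    (h1 : p' = p - x + y - z) (h2 : q' = q + x - y + z) (h3 : r' = r + x + y - w) :
    A ^ p' * B ^ q' * d ^ r'
      = A ^ p * B ^ q * d ^ r * ((B * d / A) ^ x * (A * d / B) ^ y * (B / A) ^ z * (1 / d) ^ w) := by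
  subst h1 h2 h3
  simp only [div_zpow, mul_zpow, one_div, inv_zpow, zpow_sub₀ hA, zpow_sub₀ hB, zpow_sub₀ hd,
    zpow_add₀ hA, zpow_add₀ hB, zpow_add₀ hd]
  field_simp

/-- **Theorem 4.1** (signed version).  For a signed orientable ribbon graph encoded by
a signed combinatorial map `(H, σ, θ, ε)`, the Kauffman bracket of an associated
checkerboard colorable virtual link diagram, i.e. the state sum
`∑_F A^{e₊(F)+e₋(F̄)} B^{e₋(F)+e₊(F̄)} d^{bc(F)-1}`, equals
`A^{r(Ĝ)} B^{n(Ĝ)} d^{k(Ĝ)-1} · R_Ĝ(Bd/A, Ad/B, 1/d)`, the evaluation of the signed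
Bollobás–Riordan polynomial (with `x^{s(F)} y^{-s(F)} = (B/A)^{e₋(F)-e₋(F̄)}` at this
evaluation point). -/
theorem kauffman_bracket_eq_signed_bollobas_riordan
    {H : Type*} [Fintype H] [DecidableEq H] (σ θ : Equiv.Perm H)
    (hinv : ∀ a, θ (θ a) = a) (hfp : ∀ a, θ a ≠ a)
    (ε : H → ℤ) (hεθ : ∀ a, ε (θ a) = ε a) (hεval : ∀ a, ε a = 1 ∨ ε a = -1)
    {K : Type*} [Field K] (A B d : K) (hA : A ≠ 0) (hB : B ≠ 0) (hd : d ≠ 0) :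
    ∑ S ∈ spanningSets θ,
        A ^ (ePosCount ε S + eNegCount ε Sᶜ) * B ^ (eNegCount ε S + ePosCount ε Sᶜ) *
          d ^ ((bcCount σ θ S : ℤ) - 1)
      =
    A ^ rCount σ θ (Finset.univ : Finset H) * B ^ nCount σ θ (Finset.univ : Finset H) *
      d ^ ((kCount σ θ (Finset.univ : Finset H) : ℤ) - 1) *
      ∑ S ∈ spanningSets θ,
        (B * d / A) ^ (rCount σ θ (Finset.univ : Finset H) - rCount σ θ S) *
        (A * d / B) ^ nCount σ θ S *
        (B / A) ^ (eNegCount ε S - eNegCount ε Sᶜ) *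
        (1 / d) ^ ((kCount σ θ S : ℤ) - (bcCount σ θ S : ℤ) + nCount σ θ S) := by
  rw [Finset.mul_sum]
  refine Finset.sum_congr rfl ?_
  intro S hS
  have hSinv : ∀ a ∈ S, θ a ∈ S := (Finset.mem_filter.1 hS).2
  have hScinv : ∀ a ∈ Sᶜ, θ a ∈ Sᶜ := fun a ha =>
    Finset.mem_compl.2 fun h => Finset.mem_compl.1 ha (by rw [← hinv a]; exact hSinv _ h)
  have hsplit : ∀ T : Finset H, (∀ a ∈ T, θ a ∈ T) →
      eCount T = ePosCount ε T + eNegCount ε T := by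
    intro T hT
    have hfe : T.filter (fun a => ε a = -1) = T.filter (fun a => ¬ ε a = 1) := by
      apply Finset.filter_congr
      intro a _
      rcases hεval a with h | h <;> simp [h]
    have hc : (T.filter (fun a => ε a = 1)).card + (T.filter (fun a => ε a = -1)).card
        = T.card := by
      rw [hfe, Finset.card_filter_add_card_filter_not]
    have he1 : Even (T.filter (fun a => ε a = 1)).card :=
      even_card_of_invariant θ hinv hfp _ (fun a ha => by
        simp only [Finset.mem_filter] at ha ⊢
        exact ⟨hT a ha.1, by rw [hεθ]; exact ha.2⟩)
    have he2 : Even (T.filter (fun a => ε a = -1)).card :=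
      even_card_of_invariant θ hinv hfp _ (fun a ha => by
        simp only [Finset.mem_filter] at ha ⊢
        exact ⟨hT a ha.1, by rw [hεθ]; exact ha.2⟩)
    simp only [eCount, ePosCount, eNegCount]
    rw [Nat.even_iff] at he1 he2
    have hgoal : T.card / 2 = (T.filter (fun a => ε a = 1)).card / 2
        + (T.filter (fun a => ε a = -1)).card / 2 := by omega
    exact_mod_cast hgoal
  have heS := hsplit S hSinv
  have heSc := hsplit Sᶜ hScinv
  have hevS : Even S.card := even_card_of_invariant θ hinv hfp S hSinv
  have hevSc : Even Sᶜ.card := even_card_of_invariant θ hinv hfp Sᶜ hScinv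
  have heU : eCount (Finset.univ : Finset H) = eCount S + eCount Sᶜ := by
    have hc : S.card + Sᶜ.card = (Finset.univ : Finset H).card := by
      rw [Finset.card_add_card_compl, Finset.card_univ]
    simp only [eCount]
    rw [Nat.even_iff] at hevS hevSc
    have hgoal : (Finset.univ : Finset H).card / 2 = S.card / 2 + Sᶜ.card / 2 := by omega
    exact_mod_cast hgoal
  refine zpow_key A B d hA hB hd _ _ _ _ _ _ _ _ _ _ ?_ ?_ ?_
  · simp only [nCount, rCount] at heS ⊢
    linarith [heS]
  · simp only [nCount, rCount] at heS heSc heU ⊢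
    linarith [heS, heSc, heU]
  · simp only [nCount, rCount]
    ring
end

section
/- Corollary 4.2 (Jones polynomial evaluation, ribbon-graph form). Let Ĝ = (H, σ, θ, ε) be a signed combinatorial map encoding an orientable ribbon graph with sign function ε : E → {+1, −1}, let K be a field, let u be a nonzero element of K with u⁴ ≠ −1, and set t = u⁴ and d = −u² − u^{−2} (a nonzero element of K). Then for every integer w, (−1)^w · u^{3w} · Σ_{F ⊆ E} u^{(e₋(F)+e₊(F̄)) − (e₊(F)+e₋(F̄))} · d^{bc(F)−1} = (−1)^w · u^{3w − r(Ĝ) + n(Ĝ)} · d^{k(Ĝ)−1} · Σ_{F ⊆ E} (−t−1)^{r(Ĝ)−r(F)} · (−t^{−1}−1)^{n(F)} · u^{2(e₋(F)−e₋(F̄))} · d^{−(k(F)−bc(F)+n(F))}, where F̄ = E ∖ F and all exponents are integers. (When w is the writhe of an oriented checkerboard colorable virtual link diagram L with associated signed ribbon graph Ĝ, the left-hand side is the Jones polynomial J_L(t) = (−1)^{w} t^{3w/4} ⟨L⟩(t^{−1/4}, t^{1/4}, −t^{1/2}−t^{−1/2}) with u = t^{1/4}, and the right-hand side is (−1)^w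 t^{(3w−r(Ĝ)+n(Ĝ))/4} (−t^{1/2}−t^{−1/2})^{k(Ĝ)−1} R_Ĝ(−t−1, −t^{−1}−1, 1/(−t^{1/2}−t^{−1/2})), using t^{s(F)} = u^{2(e₋(F)−e₋(F̄))}.) -/
open Finset
open scoped Classical

lemma zpow_aux {K : Type*} [Field K] (u d : K) (hu : u ≠ 0) (hd : d ≠ 0)
    (a b c e p q m s : ℤ) (h1 : a = c + 2 * p - 2 * q + m) (h2 : b = e + p + q + s) :
    u ^ a * d ^ b =
      u ^ c * d ^ e * ((u ^ (2 : ℤ) * d) ^ p * (u ^ (-2 : ℤ) * d) ^ q * u ^ m * d ^ s) := by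
  subst h1 h2
  rw [mul_zpow, mul_zpow, ← zpow_mul, ← zpow_mul]
  simp only [zpow_add₀ hu, zpow_sub₀ hu, zpow_add₀ hd, zpow_neg, neg_mul]
  field_simp

lemma half_add (a b c : ℕ) (h : a = b + c) (hb : Even b) (hc : Even c) :
    ((a / 2 : ℕ) : ℤ) = ((b / 2 : ℕ) : ℤ) + ((c / 2 : ℕ) : ℤ) := by
  obtain ⟨x, hx⟩ := hb; obtain ⟨y, hy⟩ := hc; omega


/-- **Corollary 4.2** (Jones polynomial evaluation).  For a signed orientable ribbon
graph encoded by a signed combinatorial map `(H, σ, θ, ε)`, with `u = t^{1/4}`,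
`t = u⁴` and `d = -u² - u⁻²`, and any integer `w` (the writhe), the Jones polynomial
`(-1)^w u^{3w} ⟨L⟩(u⁻¹, u, d)` equals
`(-1)^w t^{(3w - r(Ĝ) + n(Ĝ))/4} d^{k(Ĝ)-1} · R_Ĝ(-t-1, -t⁻¹-1, 1/d)`,
where `t^{s(F)} = u^{2(e₋(F) - e₋(F̄))}`. -/
theorem jones_polynomial_eq_signed_bollobas_riordan
    {H : Type*} [Fintype H] [DecidableEq H] (σ θ : Equiv.Perm H)
    (hinv : ∀ a, θ (θ a) = a) (hfp : ∀ a, θ a ≠ a)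
    (ε : H → ℤ) (hεθ : ∀ a, ε (θ a) = ε a) (hεval : ∀ a, ε a = 1 ∨ ε a = -1)
    {K : Type*} [Field K] (u t d : K) (hu : u ≠ 0) (hu4 : u ^ 4 ≠ -1)
    (ht : t = u ^ 4) (hdef : d = -u ^ 2 - u ^ (-2 : ℤ))
    (w : ℤ) :
    (-1 : K) ^ w * u ^ (3 * w) *
      ∑ S ∈ spanningSets θ,
        u ^ ((eNegCount ε S + ePosCount ε Sᶜ) - (ePosCount ε S + eNegCount ε Sᶜ)) *
          d ^ ((bcCount σ θ S : ℤ) - 1)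
      =
    (-1 : K) ^ w *
      u ^ (3 * w - rCount σ θ (Finset.univ : Finset H) + nCount σ θ (Finset.univ : Finset H)) *
      d ^ ((kCount σ θ (Finset.univ : Finset H) : ℤ) - 1) *
      ∑ S ∈ spanningSets θ,
        (-t - 1) ^ (rCount σ θ (Finset.univ : Finset H) - rCount σ θ S) *
        (-t⁻¹ - 1) ^ nCount σ θ S *
        u ^ (2 * (eNegCount ε S - eNegCount ε Sᶜ)) *
        d ^ (-((kCount σ θ S : ℤ) - (bcCount σ θ S : ℤ) + nCount σ θ S)) := by
    classical
  -- basic nonvanishing facts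
  have hu2 : u ^ (2:ℤ) ≠ 0 := zpow_ne_zero _ hu
  have hd0 : d ≠ 0 := by
    intro h
    rw [h] at hdef
    apply hu4
    have h2 : u ^ (-2:ℤ) = (u ^ 2)⁻¹ := by
      rw [zpow_neg, ← zpow_natCast]; norm_num
    rw [h2] at hdef
    field_simp at hdef
    linear_combination hdef
  have htx : -t - 1 = u ^ (2:ℤ) * d := by
    rw [ht, hdef, zpow_neg, show ((2:ℤ)) = ((2:ℕ):ℤ) by norm_num, zpow_natCast]
    field_simp
  have hty : -t⁻¹ - 1 = u ^ (-2:ℤ) * d := by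
    rw [ht, hdef]
    simp only [zpow_neg, show ((2:ℤ)) = ((2:ℕ):ℤ) by norm_num, zpow_natCast]
    field_simp
    ring
  -- counting facts
  have hsplit : ∀ T : Finset H, (∀ a ∈ T, θ a ∈ T) →
      eCount T = ePosCount ε T + eNegCount ε T := by
    intro T hT
    have hfilinv : ∀ c : ℤ, ∀ a ∈ T.filter (fun a => ε a = c),
        θ a ∈ T.filter (fun a => ε a = c) := by
      intro c a ha
      simp only [Finset.mem_filter] at ha ⊢
      exact ⟨hT a ha.1, by rw [hεθ]; exact ha.2⟩
    have hcard : T.card = (T.filter (fun a => ε a = 1)).card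
        + (T.filter (fun a => ε a = -1)).card := by
      rw [← Finset.card_filter_add_card_filter_not (p := fun a => ε a = 1)]
      congr 1
      apply Finset.card_bij (fun a _ => a)
      · intro a ha
        simp only [Finset.mem_filter] at ha ⊢
        exact ⟨ha.1, (hεval a).resolve_left ha.2⟩
      · intro a _ b _ h; exact h
      · intro a ha
        simp only [Finset.mem_filter] at ha
        refine ⟨a, ?_, rfl⟩
        simp only [Finset.mem_filter]
        exact ⟨ha.1, by rw [ha.2]; norm_num⟩
    exact half_add _ _ _ hcard
      (even_card_of_invariant θ hinv hfp _ (hfilinv 1))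
      (even_card_of_invariant θ hinv hfp _ (hfilinv (-1)))
  -- the per-subset facts and conclusion
  have main : u ^ (3 * w) *
      (∑ S ∈ spanningSets θ,
        u ^ ((eNegCount ε S + ePosCount ε Sᶜ) - (ePosCount ε S + eNegCount ε Sᶜ)) *
          d ^ ((bcCount σ θ S : ℤ) - 1)) =
      (u ^ (3 * w - rCount σ θ (Finset.univ : Finset H) + nCount σ θ (Finset.univ : Finset H)) *
        d ^ ((kCount σ θ (Finset.univ : Finset H) : ℤ) - 1)) *
      ∑ S ∈ spanningSets θ,
        (-t - 1) ^ (rCount σ θ (Finset.univ : Finset H) - rCount σ θ S) *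
        (-t⁻¹ - 1) ^ nCount σ θ S *
        u ^ (2 * (eNegCount ε S - eNegCount ε Sᶜ)) *
        d ^ (-((kCount σ θ S : ℤ) - (bcCount σ θ S : ℤ) + nCount σ θ S)) := by
    rw [Finset.mul_sum, Finset.mul_sum]
    refine Finset.sum_congr rfl ?_
    intro S hSmem
    have hS : ∀ a ∈ S, θ a ∈ S := by
      simpa [spanningSets] using hSmem
    have hSc : ∀ a ∈ Sᶜ, θ a ∈ Sᶜ := by
      intro a ha
      simp only [Finset.mem_compl] at ha ⊢
      intro h
      exact ha (by rw [← hinv a]; exact hS _ h)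
    have f1 := hsplit S hS
    have f2 := hsplit Sᶜ hSc
    have f3 : eCount (Finset.univ : Finset H) = eCount S + eCount Sᶜ := by
      refine half_add _ _ _ ?_
        (even_card_of_invariant θ hinv hfp _ hS)
        (even_card_of_invariant θ hinv hfp _ hSc)
      rw [Finset.card_compl, Finset.card_univ]
      have := Finset.card_le_univ S
      omega
    rw [htx, hty, ← mul_assoc, ← zpow_add₀ hu]
    refine zpow_aux u d hu hd0 _ _ _ _ _ _ _ _ ?_ ?_
    · simp only [rCount, nCount] at f1 f2 f3 ⊢
      omega
    · simp only [rCount, nCount]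
      omega
  calc (-1 : K) ^ w * u ^ (3 * w) *
      ∑ S ∈ spanningSets θ,
        u ^ ((eNegCount ε S + ePosCount ε Sᶜ) - (ePosCount ε S + eNegCount ε Sᶜ)) *
          d ^ ((bcCount σ θ S : ℤ) - 1)
      = (-1 : K) ^ w * (u ^ (3 * w) *
        ∑ S ∈ spanningSets θ,
          u ^ ((eNegCount ε S + ePosCount ε Sᶜ) - (ePosCount ε S + eNegCount ε Sᶜ)) *
            d ^ ((bcCount σ θ S : ℤ) - 1)) := by ring
    _ = _ := by rw [main]; ring
end

section
/- Corollary 4.2, planar case (Thistlethwaite's relation, ribbon-graph form). Let G = (H, σ, θ) be a combinatorial map encoding an orientable ribbon graph satisfying k(E) − bc(E) + n(E) = 0 (i.e., the surface G has genus zero), let K be a field, let u be a nonzero element of K with u⁴ ≠ −1, and set t = u⁴ and d = −u² − u^{−2}. Then for every integer w, (−1)^w · u^{3w} · Σ_{F ⊆ E} u^{e(G)−2e(F)} · d^{bc(F)−1} = (−1)^w · u^{3w − r(G) + n(G)} · d^{k(G)−1} · Σ_{F ⊆ E} (−t−1)^{r(G)−r(F)} · (−t^{−1}−1)^{n(F)},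 where the last sum is the Tutte polynomial T_Γ(−t, −t^{−1}) of the core graph Γ of G in its Whitney rank subset expansion T_Γ(x,y) = Σ_{F ⊆ E} (x−1)^{r(G)−r(F)} (y−1)^{n(F)}. (When w is the writhe of an oriented alternating link diagram L with associated planar ribbon graph G, the left-hand side is the Jones polynomial J_L(t) and the identity is the classical relation J_L(t) = (−1)^w t^{(3w−r(G)+n(G))/4} (−t^{1/2}−t^{−1/2})^{k(G)−1} T_Γ(−t, −t^{−1}).) -/
open Finset
open scoped Classical

/-!
Every spanning subgraph of a genus-zero map is again of genus zero. Indeed the Euler genus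
`k(F) - bc(F) + n(F)` never decreases when an edge `{a, θ a}` is added: `σ θ_F` gets multiplied
by the transposition `(a θa)`, which splits or merges boundary cycles, and it merges two of them
whenever the edge joins two components. The Euler genus vanishes for `F = ∅` and, by hypothesis,
for `F = E`, hence for every `F`, i.e. `bc(F) = e(F) + 2k(F) - v(G)`. With this, and since
`-t - 1 = u² d` and `-t⁻¹ - 1 = u⁻² d`, each state term `u^(e(G) - 2e(F)) d^(bc(F) - 1)` equals
the corresponding term of the Tutte expansion times the prefactor.
-/

open Equiv MulAction

namespace Setoid

variable {α : Type*}

theorem card_quotient_le_of_le [Finite α] {s t : Setoid α} (h : s ≤ t) :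
    Nat.card (Quotient t) ≤ Nat.card (Quotient s) :=
  Nat.card_le_card_of_surjective (Quotient.map' id h) <| by
    rintro ⟨x⟩; exact ⟨Quotient.mk s x, rfl⟩

theorem card_quotient_lt_of_le [Finite α] {s t : Setoid α} (h : s ≤ t) {a b : α}
    (ht : t a b) (hs : ¬ s a b) : Nat.card (Quotient t) < Nat.card (Quotient s) := by
  let f : Quotient s → Quotient t := Quotient.map' id h
  have hf : Function.Surjective f := by rintro ⟨x⟩; exact ⟨Quotient.mk s x, rfl⟩
  refine (card_quotient_le_of_le h).lt_of_ne fun hcard => hs (Quotient.exact ?_)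
  exact ((Nat.bijective_iff_surjective_and_card f).2 ⟨hf, hcard.symm⟩).1 (Quotient.sound ht)

/-- The finest equivalence relation coarser than `s` relating `a` and `b`. -/
def joinPair (s : Setoid α) (a b : α) : Setoid α where
  r x y := s x y ∨ (s x a ∧ s b y) ∨ (s x b ∧ s a y)
  iseqv := by
    refine ⟨fun x => .inl (s.refl x), ?_, ?_⟩
    · rintro x y (h | ⟨h₁, h₂⟩ | ⟨h₁, h₂⟩)
      exacts [.inl (s.symm h), .inr (.inr ⟨s.symm h₂, s.symm h₁⟩),
        .inr (.inl ⟨s.symm h₂, s.symm h₁⟩)]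
    · rintro x y z (h | ⟨h₁, h₂⟩ | ⟨h₁, h₂⟩) (g | ⟨g₁, g₂⟩ | ⟨g₁, g₂⟩)
      exacts [.inl (s.trans h g), .inr (.inl ⟨s.trans h g₁, g₂⟩),
        .inr (.inr ⟨s.trans h g₁, g₂⟩), .inr (.inl ⟨h₁, s.trans h₂ g⟩),
        .inl (s.trans h₁ (s.trans (s.symm (s.trans h₂ g₁)) g₂)), .inl (s.trans h₁ g₂),
        .inr (.inr ⟨h₁, s.trans h₂ g⟩), .inl (s.trans h₁ g₂),
        .inl (s.trans h₁ (s.trans (s.symm (s.trans h₂ g₁)) g₂))]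

variable {s : Setoid α} {a b : α}

theorem le_joinPair : s ≤ s.joinPair a b := fun _ _ h => .inl h

theorem joinPair_le_of_rel (hab : s a b) : s.joinPair a b ≤ s := by
  rintro x y (h | ⟨h₁, h₂⟩ | ⟨h₁, h₂⟩)
  exacts [h, s.trans h₁ (s.trans hab h₂), s.trans h₁ (s.trans (s.symm hab) h₂)]

theorem card_quotient_le_card_joinPair_add_one [Finite α] (s : Setoid α) (a b : α) :
    Nat.card (Quotient s) ≤ Nat.card (Quotient (s.joinPair a b)) + 1 := by
  classical
  let f : Quotient s → Option (Quotient (s.joinPair a b)) := fun q =>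
    if q = Quotient.mk s b then none else some (Quotient.map' id le_joinPair q)
  have hf : Function.Injective f := by
    intro p q hpq
    induction p using Quotient.inductionOn with | h x =>
    induction q using Quotient.inductionOn with | h y =>
    by_cases hx : Quotient.mk s x = Quotient.mk s b <;>
      by_cases hy : Quotient.mk s y = Quotient.mk s b <;>
      simp only [f, hx, hy, if_true, if_false, reduceCtorEq, Option.some_inj] at hpq
    · rw [hx, hy]
    · rcases Quotient.exact hpq with h | ⟨-, h⟩ | ⟨h, -⟩
      · exact Quotient.sound h
      · exact absurd (Quotient.sound (s.symm h)) hy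
      · exact absurd (Quotient.sound h) hx
  simpa using Nat.card_le_card_of_injective f hf

end Setoid

namespace Equiv.Perm

variable {α : Type*}

theorem orbitRel_apply_self {G : Subgroup (Perm α)} {g : Perm α} (hg : g ∈ G) (x : α) :
    orbitRel G α (g x) x :=
  ⟨⟨g, hg⟩, rfl⟩

theorem orbitRel_closure_le {s : Set (Perm α)} {t : Setoid α} (h : ∀ g ∈ s, ∀ x, t (g x) x) :
    orbitRel (Subgroup.closure s) α ≤ t := by
  have key : ∀ g ∈ Subgroup.closure s, ∀ x, t (g x) x := by
    intro g hg
    induction hg using Subgroup.closure_induction with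
    | mem g hg => exact h g hg
    | one => exact t.refl
    | mul g g' _ _ hg hg' => exact fun x => t.trans (hg (g' x)) (hg' x)
    | inv g _ hg => exact fun x => t.symm (by simpa using hg (g⁻¹ x))
  rintro _ y ⟨⟨g, hg⟩, rfl⟩
  exact key g hg y

theorem orbitRel_mono {G G' : Subgroup (Perm α)} (h : G ≤ G') : orbitRel G α ≤ orbitRel G' α := by
  rintro _ y ⟨⟨g, hg⟩, rfl⟩
  exact orbitRel_apply_self (h hg) y

theorem orbitRel_zpowers_iff {π : Perm α} {x y : α} :
    orbitRel (Subgroup.zpowers π) α x y ↔ π.SameCycle y x := by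
  constructor
  · rintro ⟨⟨g, hg⟩, rfl⟩
    obtain ⟨k, rfl⟩ := Subgroup.mem_zpowers_iff.1 hg
    exact ⟨k, rfl⟩
  · rintro ⟨k, rfl⟩
    exact orbitRel_apply_self (Subgroup.zpow_mem_zpowers π k) y

variable [DecidableEq α]

theorem joinPair_mul_swap_apply {t : Setoid α} {π : Perm α} (hπ : ∀ x, t (π x) x)
    (a b x : α) : t.joinPair a b ((π * swap a b) x) x := by
  rcases eq_or_ne x a with rfl | hxa
  · exact .inr (.inr ⟨by simpa using hπ b, t.refl x⟩)
  rcases eq_or_ne x b with rfl | hxb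
  · exact .inr (.inl ⟨by simpa using hπ a, t.refl x⟩)
  · simpa [swap_apply_of_ne_of_ne hxa hxb] using Setoid.le_joinPair (hπ x)

theorem sameCycle_mul_swap_of_not_sameCycle [Finite α] {π : Perm α} {a b : α}
    (h : ¬ π.SameCycle a b) : (π * swap a b).SameCycle a b := by
  by_contra hab
  set ρ := π * swap a b
  -- While it avoids `b`, the `ρ`-orbit of `ρ a = π b` follows `π`, so it never leaves the
  -- `π`-cycle of `b` and cannot return to `a`.
  have orbit_stays : ∀ n : ℕ, π.SameCycle b ((ρ ^ n) (π b)) := by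
    intro n
    induction n with
    | zero => exact ⟨1, rfl⟩
    | succ n ih =>
      have hna : (ρ ^ n) (π b) ≠ a := fun hn => h (hn ▸ ih).symm
      have hnb : (ρ ^ n) (π b) ≠ b := fun hn => hab ⟨(n + 1 : ℕ), by
        rw [zpow_natCast, pow_succ, Perm.mul_apply, show ρ a = π b by simp [ρ], hn]⟩
      rw [pow_succ', Perm.mul_apply]
      simpa [ρ, swap_apply_of_ne_of_ne hna hnb] using ih
  obtain ⟨n, hn⟩ := (show ρ.SameCycle (π b) a from ⟨-1, by simp [ρ]⟩).exists_nat_pow_eq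
  exact h (hn ▸ orbit_stays n).symm

theorem orbitRel_zpowers_le_joinPair_mul_swap (π : Perm α) (a b : α) :
    orbitRel (Subgroup.zpowers π) α ≤
      (orbitRel (Subgroup.zpowers (π * swap a b)) α).joinPair a b := by
  rw [Subgroup.zpowers_eq_closure π]
  refine orbitRel_closure_le ?_
  rintro g rfl x
  have := joinPair_mul_swap_apply (π := g * swap a b)
    (orbitRel_apply_self (Subgroup.mem_zpowers _)) a b x
  rwa [mul_swap_mul_self] at this

variable [Fintype α]

theorem permOrbits_mul_swap_le (π : Perm α) (a b : α) :
    permOrbits (π * swap a b) ≤ permOrbits π + 1 :=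
  (Setoid.card_quotient_le_card_joinPair_add_one _ a b).trans <|
    Nat.add_le_add_right (Setoid.card_quotient_le_of_le
      (orbitRel_zpowers_le_joinPair_mul_swap π a b)) 1

theorem permOrbits_mul_swap_lt {π : Perm α} {a b : α} (h : ¬ π.SameCycle a b) :
    permOrbits (π * swap a b) < permOrbits π := by
  have hmerge := orbitRel_zpowers_iff.2 (sameCycle_mul_swap_of_not_sameCycle h).symm
  exact Setoid.card_quotient_lt_of_le
    ((orbitRel_zpowers_le_joinPair_mul_swap π a b).trans (Setoid.joinPair_le_of_rel hmerge))
    hmerge fun h' => h (orbitRel_zpowers_iff.1 h').symm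

end Equiv.Perm

section RibbonGraph

variable {H : Type*} {σ θ : Perm H} {S : Finset H} {a : H}

theorem apply_notMem_of_notMem (hS : ∀ x ∈ S, θ x ∈ S) (hinv : ∀ x, θ (θ x) = x)
    (ha : a ∉ S) : θ a ∉ S :=
  fun h => ha (hinv a ▸ hS _ h)

variable [DecidableEq H]

theorem restrictPerm_apply (hS : ∀ x ∈ S, θ x ∈ S) (hinv : ∀ x, θ (θ x) = x) (x : H) :
    restrictPerm θ S x = if x ∈ S then θ x else x := by
  rw [restrictPerm, dif_pos ⟨hS, hinv⟩]
  rfl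

theorem restrictPerm_empty (hinv : ∀ x, θ (θ x) = x) : restrictPerm θ ∅ = 1 := by
  ext x
  rw [restrictPerm_apply (fun x hx => absurd hx (Finset.notMem_empty x)) hinv]
  simp

theorem insert_insert_invariant (hS : ∀ x ∈ S, θ x ∈ S) (hinv : ∀ x, θ (θ x) = x) (a : H) :
    ∀ x ∈ insert a (insert (θ a) S), θ x ∈ insert a (insert (θ a) S) := by
  intro x hx
  simp only [Finset.mem_insert] at hx ⊢
  rcases hx with rfl | rfl | hx
  exacts [.inr (.inl rfl), .inl (hinv a), .inr (.inr (hS x hx))]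

theorem restrictPerm_insert_insert (hS : ∀ x ∈ S, θ x ∈ S) (hinv : ∀ x, θ (θ x) = x)
    (ha : a ∉ S) :
    restrictPerm θ (insert a (insert (θ a) S)) = restrictPerm θ S * swap a (θ a) := by
  have hb := apply_notMem_of_notMem hS hinv ha
  ext x
  rw [Perm.mul_apply, restrictPerm_apply (insert_insert_invariant hS hinv a) hinv,
    restrictPerm_apply hS hinv]
  rcases eq_or_ne x a with rfl | hxa
  · simp [hb]
  rcases eq_or_ne x (θ a) with rfl | hxb
  · simp [ha, hinv]
  · by_cases hx : x ∈ S <;> simp [hx, hxa, hxb, swap_apply_of_ne_of_ne hxa hxb]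

theorem eCount_insert_insert (hS : ∀ x ∈ S, θ x ∈ S) (hinv : ∀ x, θ (θ x) = x)
    (hfp : ∀ x, θ x ≠ x) (ha : a ∉ S) :
    eCount (insert a (insert (θ a) S)) = eCount S + 1 := by
  have hcard : (insert a (insert (θ a) S)).card = S.card + 2 := by
    rw [Finset.card_insert_of_notMem (by simp [(hfp a).symm, ha]),
      Finset.card_insert_of_notMem (apply_notMem_of_notMem hS hinv ha)]
  simp only [eCount, hcard, Nat.add_div_right _ two_pos]
  push_cast
  ring

def componentRel (σ θ : Perm H) (S : Finset H) : Setoid H :=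
  orbitRel (Subgroup.closure {σ, restrictPerm θ S}) H

theorem orbitRel_zpowers_le_componentRel :
    orbitRel (Subgroup.zpowers (σ * restrictPerm θ S)) H ≤ componentRel σ θ S :=
  Perm.orbitRel_mono <| Subgroup.zpowers_le.2 <| Subgroup.mul_mem _
    (Subgroup.subset_closure (Set.mem_insert _ _))
    (Subgroup.subset_closure (Set.mem_insert_of_mem _ rfl))

theorem componentRel_insert_insert_le (hS : ∀ x ∈ S, θ x ∈ S) (hinv : ∀ x, θ (θ x) = x)
    (ha : a ∉ S) :
    componentRel σ θ (insert a (insert (θ a) S)) ≤ (componentRel σ θ S).joinPair a (θ a) := by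
  have hσ : ∀ x, componentRel σ θ S (σ x) x :=
    Perm.orbitRel_apply_self (Subgroup.subset_closure (Set.mem_insert _ _))
  have hρ : ∀ x, componentRel σ θ S (restrictPerm θ S x) x :=
    Perm.orbitRel_apply_self (Subgroup.subset_closure (Set.mem_insert_of_mem _ rfl))
  change orbitRel (Subgroup.closure {σ, restrictPerm θ (insert a (insert (θ a) S))}) H ≤ _
  rw [restrictPerm_insert_insert hS hinv ha]
  refine Perm.orbitRel_closure_le ?_
  rintro g (rfl | rfl) x
  · exact Setoid.le_joinPair (hσ x)
  · exact Perm.joinPair_mul_swap_apply hρ a (θ a) x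

end RibbonGraph

section EulerGenus

variable {H : Type*} [Fintype H] [DecidableEq H] {σ θ : Perm H}

/-- Twice the genus of the ribbon subgraph `S`: Euler's formula `v - e + bc = 2k - 2g`,
with `v(S) = v(G)`, rearranges to `2g = k - bc + n`. -/
noncomputable def eulerGenus (σ θ : Perm H) (S : Finset H) : ℤ :=
  kCount σ θ S - bcCount σ θ S + nCount σ θ S

theorem eulerGenus_empty (hinv : ∀ x, θ (θ x) = x) : eulerGenus σ θ ∅ = 0 := by
  have hk : kCount σ θ ∅ = vCount σ := by
    rw [kCount, vCount, permOrbits, restrictPerm_empty hinv, Set.pair_comm,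
      Subgroup.closure_insert_one, ← Subgroup.zpowers_eq_closure]
  have hbc : bcCount σ θ ∅ = vCount σ := by
    rw [bcCount, vCount, restrictPerm_empty hinv, mul_one]
  simp [eulerGenus, nCount, rCount, eCount, hk, hbc]

theorem eulerGenus_le_insert_insert (hinv : ∀ x, θ (θ x) = x) (hfp : ∀ x, θ x ≠ x)
    {S : Finset H} (hS : ∀ x ∈ S, θ x ∈ S) {a : H} (ha : a ∉ S) :
    eulerGenus σ θ S ≤ eulerGenus σ θ (insert a (insert (θ a) S)) := by
  set S' := insert a (insert (θ a) S)
  have hle := componentRel_insert_insert_le (σ := σ) hS hinv ha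
  have hbc : bcCount σ θ S' = permOrbits (σ * restrictPerm θ S * swap a (θ a)) := by
    rw [bcCount, restrictPerm_insert_insert hS hinv ha, mul_assoc]
  -- The new edge `{a, θ a}` either lies in one component, and changes `bc` by at most one,
  -- or joins two components, and then also two boundary components.
  have hcounts : (kCount σ θ S ≤ kCount σ θ S' ∧ bcCount σ θ S' ≤ bcCount σ θ S + 1) ∨
      (kCount σ θ S ≤ kCount σ θ S' + 1 ∧ bcCount σ θ S' + 1 ≤ bcCount σ θ S) := by
    by_cases hrel : componentRel σ θ S a (θ a)
    · exact .inl ⟨Setoid.card_quotient_le_of_le (hle.trans (Setoid.joinPair_le_of_rel hrel)),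
        hbc ▸ Perm.permOrbits_mul_swap_le _ _ _⟩
    · refine .inr ⟨(Setoid.card_quotient_le_card_joinPair_add_one _ a (θ a)).trans
        (Nat.add_le_add_right (Setoid.card_quotient_le_of_le hle) 1), hbc ▸ ?_⟩
      exact Perm.permOrbits_mul_swap_lt fun hc =>
        hrel (orbitRel_zpowers_le_componentRel (Perm.orbitRel_zpowers_iff.2 hc.symm))
  have he : eCount S' = eCount S + 1 := eCount_insert_insert hS hinv hfp ha
  simp only [eulerGenus, nCount, rCount, he]
  omega

theorem eulerGenus_mono (hinv : ∀ x, θ (θ x) = x) (hfp : ∀ x, θ x ≠ x) {S T : Finset H}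
    (hS : ∀ x ∈ S, θ x ∈ S) (hT : ∀ x ∈ T, θ x ∈ T) (hST : S ⊆ T) :
    eulerGenus σ θ S ≤ eulerGenus σ θ T := by
  induction hn : (T \ S).card using Nat.strong_induction_on generalizing S with
  | _ n ih =>
  rcases (T \ S).eq_empty_or_nonempty with h | ⟨a, haTS⟩
  · rw [hST.antisymm (Finset.sdiff_eq_empty_iff_subset.1 h)]
  obtain ⟨haT, haS⟩ := Finset.mem_sdiff.1 haTS
  have hsub : insert a (insert (θ a) S) ⊆ T :=
    Finset.insert_subset haT (Finset.insert_subset (hT a haT) hST)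
  have hlt : (T \ insert a (insert (θ a) S)).card < n := hn ▸ Finset.card_lt_card
    ⟨Finset.sdiff_subset_sdiff le_rfl (by grind), fun h => by simpa using h haTS⟩
  exact (eulerGenus_le_insert_insert hinv hfp hS haS).trans
    (ih _ hlt (insert_insert_invariant hS hinv a) hsub rfl)

theorem eulerGenus_eq_zero_of_univ (hinv : ∀ x, θ (θ x) = x) (hfp : ∀ x, θ x ≠ x)
    (hgenus : eulerGenus σ θ Finset.univ = 0) {S : Finset H} (hS : ∀ x ∈ S, θ x ∈ S) :
    eulerGenus σ θ S = 0 :=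
  le_antisymm (hgenus ▸ eulerGenus_mono hinv hfp hS (by simp) (Finset.subset_univ S))
    (eulerGenus_empty hinv ▸ eulerGenus_mono hinv hfp (by simp) hS (Finset.empty_subset S))

theorem bcCount_eq_of_eulerGenus_eq_zero {S : Finset H} (h : eulerGenus σ θ S = 0) :
    (bcCount σ θ S : ℤ) = eCount S + 2 * kCount σ θ S - vCount σ := by
  simp only [eulerGenus, nCount, rCount] at h
  linarith

end EulerGenus

section Algebra

variable {K : Type*} [Field K] {u d : K}

theorem neg_pow_four_sub_one_eq (hu : u ≠ 0) :
    -u ^ 4 - 1 = u ^ (2 : ℤ) * (-u ^ 2 - u ^ (-2 : ℤ)) := by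
  simp only [zpow_neg, zpow_ofNat]
  field_simp

theorem neg_inv_pow_four_sub_one_eq (hu : u ≠ 0) :
    -(u ^ 4)⁻¹ - 1 = u ^ (-2 : ℤ) * (-u ^ 2 - u ^ (-2 : ℤ)) := by
  simp only [zpow_neg, zpow_ofNat]
  field_simp
  ring

theorem mul_zpow_mul_mul_zpow (hu : u ≠ 0) (hd : d ≠ 0) (m n : ℤ) :
    (u ^ (2 : ℤ) * d) ^ m * (u ^ (-2 : ℤ) * d) ^ n = u ^ (2 * m - 2 * n) * d ^ (m + n) := by
  rw [mul_zpow, mul_zpow, ← zpow_mul, ← zpow_mul, show 2 * m - 2 * n = 2 * m + -2 * n by ring,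
    zpow_add₀ hu, zpow_add₀ hd]
  ring

/-- `v`, `kG`, `eG` count the vertices, components and edges of the graph, `k`, `e` the components
and edges of a planar subgraph, whose boundary count is `e + 2k - v` by Euler's formula. -/
theorem kauffman_term_eq_tutte_term (hu : u ≠ 0) (hd : d ≠ 0) (s : K) (w v kG eG k e : ℤ) :
    s * u ^ (3 * w) * (u ^ (eG - 2 * e) * d ^ (e + 2 * k - v - 1)) =
      s * u ^ (3 * w - (v - kG) + (eG - (v - kG))) * d ^ (kG - 1) *
        ((u ^ (2 : ℤ) * d) ^ (v - kG - (v - k)) * (u ^ (-2 : ℤ) * d) ^ (e - (v - k))) := by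
  rw [mul_zpow_mul_mul_zpow hu hd]
  calc s * u ^ (3 * w) * (u ^ (eG - 2 * e) * d ^ (e + 2 * k - v - 1))
      = s * (u ^ (3 * w + (eG - 2 * e)) * d ^ (e + 2 * k - v - 1)) := by
        rw [zpow_add₀ hu]; ring
    _ = s * (u ^ (3 * w - (v - kG) + (eG - (v - kG)) +
            (2 * (v - kG - (v - k)) - 2 * (e - (v - k)))) *
          d ^ (kG - 1 + (v - kG - (v - k) + (e - (v - k))))) := by
        congr 3 <;> ring
    _ = _ := by rw [zpow_add₀ hu, zpow_add₀ hd]; ring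

end Algebra

/-- **Corollary 4.2, planar case** (Thistlethwaite's relation).  For an orientable
ribbon graph encoded by a combinatorial map `(H, σ, θ)` of genus zero (i.e. with
`k(E) - bc(E) + n(E) = 0`), with `u = t^{1/4}`, `t = u⁴`, `d = -u² - u⁻²`, and any
integer `w` (the writhe), the Jones polynomial `(-1)^w u^{3w} ⟨L⟩(u⁻¹, u, d)` equals
`(-1)^w t^{(3w - r(G) + n(G))/4} d^{k(G)-1} · T_Γ(-t, -t⁻¹)`, where the Tutte
polynomial of the core graph `Γ` is given by its Whitney rank subset expansion. -/
theorem jones_polynomial_eq_tutte_planar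
    {H : Type*} [Fintype H] [DecidableEq H] (σ θ : Equiv.Perm H)
    (hinv : ∀ a, θ (θ a) = a) (hfp : ∀ a, θ a ≠ a)
    (hgenus : (kCount σ θ (Finset.univ : Finset H) : ℤ) -
        (bcCount σ θ (Finset.univ : Finset H) : ℤ) +
        nCount σ θ (Finset.univ : Finset H) = 0)
    {K : Type*} [Field K] (u t d : K) (hu : u ≠ 0) (hu4 : u ^ 4 ≠ -1)
    (ht : t = u ^ 4) (hdef : d = -u ^ 2 - u ^ (-2 : ℤ))
    (w : ℤ) :
    (-1 : K) ^ w * u ^ (3 * w) *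
      ∑ S ∈ spanningSets θ,
        u ^ (eCount (Finset.univ : Finset H) - 2 * eCount S) *
          d ^ ((bcCount σ θ S : ℤ) - 1)
      =
    (-1 : K) ^ w *
      u ^ (3 * w - rCount σ θ (Finset.univ : Finset H) + nCount σ θ (Finset.univ : Finset H)) *
      d ^ ((kCount σ θ (Finset.univ : Finset H) : ℤ) - 1) *
      ∑ S ∈ spanningSets θ,
        (-t - 1) ^ (rCount σ θ (Finset.univ : Finset H) - rCount σ θ S) *
        (-t⁻¹ - 1) ^ nCount σ θ S := by
  have hd : d ≠ 0 := by
    rintro rfl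
    have h := neg_pow_four_sub_one_eq hu
    rw [← hdef, mul_zero] at h
    exact hu4 (by linear_combination -h)
  have hA : -t - 1 = u ^ (2 : ℤ) * d := by rw [ht, hdef, neg_pow_four_sub_one_eq hu]
  have hB : -t⁻¹ - 1 = u ^ (-2 : ℤ) * d := by rw [ht, hdef, neg_inv_pow_four_sub_one_eq hu]
  simp only [Finset.mul_sum]
  refine Finset.sum_congr rfl fun S hS => ?_
  have hplanar := eulerGenus_eq_zero_of_univ hinv hfp hgenus (Finset.mem_filter.1 hS).2
  rw [bcCount_eq_of_eulerGenus_eq_zero hplanar, hA, hB]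
  exact kauffman_term_eq_tutte_term hu hd _ w _ _ _ _ _
end
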